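/- arXiv:1110.6585 — 3 statements merged into one kernel-verified Lean document; each statement's English description precedes it below -/
import Mathlib

section
/- Let R be any ring with 1 and n ≥ 1. If a matrix A ∈ Mₙ(R) admits two (not necessarily strict) Bruhat decompositions A = T₁·U₁·P_{π₁}·V₁ = T₂·U₂·P_{π₂}·V₂, where each Tᵢ is unipotent lower triangular, each Uᵢ is an invertible diagonal matrix, each P_{πᵢ} is a permutation matrix, and each Vᵢ is unipotent upper triangular, then π₁ = π₂ and U₁ = U₂. -/
/-- A matrix is unipotent lower triangular if all entries above the diagonal vanish and
all diagonal entries equal `1`. -/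
def UnipotentLower {R : Type*} [Zero R] [One R] {n : ℕ}
    (T : Matrix (Fin n) (Fin n) R) : Prop :=
  (∀ i j : Fin n, i < j → T i j = 0) ∧ ∀ i, T i i = 1

/-- A matrix is unipotent upper triangular if all entries below the diagonal vanish and
all diagonal entries equal `1`. -/
def UnipotentUpper {R : Type*} [Zero R] [One R] {n : ℕ}
    (V : Matrix (Fin n) (Fin n) R) : Prop :=
  (∀ i j : Fin n, j < i → V i j = 0) ∧ ∀ i, V i i = 1

/-!
Cancelling the unipotent factors turns the two decompositions into `L * P π₁ = U₂ * P π₂ * W`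
with `L = T₂⁻¹ * T₁ * U₁` lower triangular with the diagonal of `U₁`, and `W = V₂ * V₁⁻¹`
unipotent upper triangular. The entry in position `(i, π₂ i)` reads `L i ((π₁⁻¹ * π₂) i) = U₂ i i`,
which is nonzero, so `π₁⁻¹ * π₂` never moves an index upwards and is the identity; the diagonal
entries then give `U₁ = U₂`. Since `R` need not be commutative there are no determinants: the
inverse of a unipotent triangular matrix `1 - N` is the geometric series of the nilpotent `N`.
-/

open Matrix Function Finset

theorem Equiv.Perm.eq_one_of_forall_apply_le {α : Type*} [LinearOrder α] [WellFoundedLT α]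
    {σ : Equiv.Perm α} (h : ∀ i, σ i ≤ i) : σ = 1 := by
  ext i
  induction i using WellFoundedLT.induction with
  | _ i ih => exact (h i).antisymm (not_lt.1 fun hlt => hlt.ne (σ.injective (ih _ hlt)))

namespace Matrix

variable {m α R : Type*} [Fintype m]

theorem mul_permMatrix_apply [DecidableEq m] [NonAssocSemiring R] (L : Matrix m m R)
    (σ : Equiv.Perm m) (i j : m) : (L * σ.permMatrix R) i j = L i (σ.symm j) := by
  rw [PEquiv.mul_toMatrix_toPEquiv, submatrix_apply, id]

theorem permMatrix_mul_apply [DecidableEq m] [NonAssocSemiring R] (σ : Equiv.Perm m)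
    (W : Matrix m m R) (i j : m) : (σ.permMatrix R * W) i j = W (σ i) j := by
  rw [PEquiv.toMatrix_toPEquiv_mul, submatrix_apply, id]

theorem isUnit_apply_of_isUnit_diagonal [DecidableEq m] [Semiring R] {d : m → R}
    (h : IsUnit (diagonal d)) (i : m) : IsUnit (d i) := by
  obtain ⟨B, hdB, hBd⟩ := isUnit_iff_exists.1 h
  refine isUnit_iff_exists.2 ⟨B i i, ?_, ?_⟩
  · simpa using congr_fun₂ hdB i i
  · simpa using congr_fun₂ hBd i i

variable [LinearOrder α] {b : m → α}

theorem BlockTriangular.mul_apply_self [NonUnitalNonAssocSemiring R] {A B : Matrix m m R}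
    (hA : A.BlockTriangular b) (hB : B.BlockTriangular b) (hb : Injective b) (i : m) :
    (A * B) i i = A i i * B i i := by
  rw [mul_apply, sum_eq_single i]
  · intro k _ hk
    rcases lt_or_gt_of_ne (hb.ne hk) with h | h
    · rw [hA h, zero_mul]
    · rw [hB h, mul_zero]
  · simp

theorem pow_card_eq_zero_of_strictly_blockTriangular [DecidableEq m] [Semiring R]
    {N : Matrix m m R} (hN : ∀ ⦃i j⦄, b j ≤ b i → N i j = 0) : N ^ Fintype.card m = 0 := by
  -- the number of indices with a smaller block strictly grows along every nonzero entry of `N`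
  set r : m → ℕ := fun i => #{l | b l < b i}
  have hr : ∀ ⦃i j⦄, b i < b j → r i < r j := fun i j hij =>
    card_lt_card <| (ssubset_iff_of_subset (monotone_filter_right _ fun _ _ hl => hl.trans hij)).2
      ⟨i, by simpa using hij, by simp⟩
  have hpow : ∀ k i j, r j < r i + k → (N ^ k) i j = 0 := by
    intro k
    induction k with
    | zero => intro i j h; simp [one_apply_ne (fun hij : i = j => by simp [hij] at h)]
    | succ k ih =>
      intro i j h
      rw [pow_succ, mul_apply]
      refine sum_eq_zero fun l _ => ?_
      by_cases hl : r l < r i + k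
      · rw [ih i l hl, zero_mul]
      · rw [hN (not_lt.1 fun hlj => by have := hr hlj; omega), mul_zero]
  ext i j
  have hrj : r j < Fintype.card m := card_lt_univ_of_notMem (x := j) (by simp)
  exact hpow _ i j (by omega)

theorem BlockTriangular.exists_inverse_of_diag_eq_one [DecidableEq m] [Ring R]
    {T : Matrix m m R} (hT : T.BlockTriangular b) (hb : Injective b) (hT1 : ∀ i, T i i = 1) :
    ∃ T' : Matrix m m R, T'.BlockTriangular b ∧ (∀ i, T' i i = 1) ∧ T' * T = 1 ∧ T * T' = 1 := by
  set N := 1 - T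
  have hN : ∀ ⦃i j⦄, b j ≤ b i → N i j = 0 := fun i j hij => by
    rcases hij.lt_or_eq with h | h
    · simp [N, hT h, one_apply_ne (ne_of_apply_ne b h.ne')]
    · obtain rfl := hb h
      simp [N, hT1]
  have hNn := pow_card_eq_zero_of_strictly_blockTriangular hN
  set T' := ∑ k ∈ range (Fintype.card m), N ^ k
  have hT' : T'.BlockTriangular b := (blockTriangularSubsemiring R b).sum_mem fun k _ =>
    BlockTriangular.pow (M := N) (fun _ _ h => hN h.le) k
  have hT'T : T' * T = 1 := by simpa [hNn, N] using geom_sum_mul_neg N (Fintype.card m)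
  refine ⟨T', hT', fun i => ?_, hT'T, by simpa [hNn, N] using mul_neg_geom_sum N (Fintype.card m)⟩
  simpa [hT'.mul_apply_self hT hb, hT1] using congr_fun₂ hT'T i i

theorem perm_eq_and_diag_eq_of_mul_permMatrix_eq [DecidableEq m] [LinearOrder m] [Semiring R]
    {L W : Matrix m m R} {d : m → R} {σ τ : Equiv.Perm m}
    (hL : L.IsLowerTriangular) (hW : ∀ i, W i i = 1) (hd : ∀ i, d i ≠ 0)
    (h : L * σ.permMatrix R = diagonal d * τ.permMatrix R * W) : σ = τ ∧ ∀ i, L i i = d i := by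
  have entry : ∀ i j, L i (σ.symm j) = d i * W (τ i) j := fun i j => by
    rw [← mul_permMatrix_apply L σ i j, h, Matrix.mul_assoc, diagonal_mul, permMatrix_mul_apply]
  obtain rfl : σ = τ := by
    refine inv_mul_eq_one.1 (Equiv.Perm.eq_one_of_forall_apply_le fun i => not_lt.1 fun hlt => ?_)
    have hdi := entry i (τ i)
    rw [hW, mul_one, ← Equiv.Perm.inv_def, ← Equiv.Perm.mul_apply] at hdi
    exact hd i (hdi.symm.trans (hL hlt))
  exact ⟨rfl, fun i => by simpa [hW] using entry i (σ i)⟩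

end Matrix

theorem UnipotentLower.isLowerTriangular {R : Type*} [Zero R] [One R] {n : ℕ}
    {T : Matrix (Fin n) (Fin n) R} (hT : UnipotentLower T) : T.IsLowerTriangular :=
  fun i j h => hT.1 i j h

theorem UnipotentUpper.isUpperTriangular {R : Type*} [Zero R] [One R] {n : ℕ}
    {V : Matrix (Fin n) (Fin n) R} (hV : UnipotentUpper V) : V.IsUpperTriangular :=
  fun i j h => hV.1 i j h

theorem bruhat_perm_diag_unique_general {R : Type*} [Ring R] [Nontrivial R] {n : ℕ}
    (T₁ T₂ U₁ U₂ V₁ V₂ : Matrix (Fin n) (Fin n) R) (π₁ π₂ : Equiv.Perm (Fin n))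
    (hT₁ : UnipotentLower T₁) (hT₂ : UnipotentLower T₂)
    (hU₁ : U₁.IsDiag) (hU₂ : U₂.IsDiag) (hU₂u : IsUnit U₂)
    (hV₁ : UnipotentUpper V₁) (hV₂ : UnipotentUpper V₂)
    (heq : T₁ * U₁ * π₁.permMatrix R * V₁ = T₂ * U₂ * π₂.permMatrix R * V₂) :
    π₁ = π₂ ∧ U₁ = U₂ := by
  obtain ⟨d₁, rfl⟩ : ∃ d, U₁ = diagonal d := ⟨_, hU₁.diagonal_diag.symm⟩
  obtain ⟨d₂, rfl⟩ : ∃ d, U₂ = diagonal d := ⟨_, hU₂.diagonal_diag.symm⟩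
  obtain ⟨T₂', hT₂'l, hT₂'d, hT₂'T₂, -⟩ :=
    hT₂.isLowerTriangular.exists_inverse_of_diag_eq_one OrderDual.toDual.injective hT₂.2
  obtain ⟨V₁', hV₁'u, hV₁'d, -, hV₁V₁'⟩ :=
    hV₁.isUpperTriangular.exists_inverse_of_diag_eq_one injective_id hV₁.2
  have hT : (T₂' * T₁).IsLowerTriangular := hT₂'l.mul hT₁.isLowerTriangular
  have hW : ∀ i, (V₂ * V₁') i i = 1 := fun i => by
    rw [hV₂.isUpperTriangular.mul_apply_self hV₁'u injective_id, hV₂.2, hV₁'d, one_mul]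
  have key : T₂' * T₁ * diagonal d₁ * π₁.permMatrix R =
      diagonal d₂ * π₂.permMatrix R * (V₂ * V₁') := calc
    _ = T₂' * (T₁ * diagonal d₁ * π₁.permMatrix R * V₁) * V₁' := by
      simp only [Matrix.mul_assoc, hV₁V₁', Matrix.mul_one]
    _ = T₂' * (T₂ * diagonal d₂ * π₂.permMatrix R * V₂) * V₁' := by rw [heq]
    _ = _ := by simp only [← Matrix.mul_assoc, hT₂'T₂, Matrix.one_mul]
  obtain ⟨rfl, hdiag⟩ := perm_eq_and_diag_eq_of_mul_permMatrix_eq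
    (hT.mul (blockTriangular_diagonal d₁)) hW
    (fun i => (isUnit_apply_of_isUnit_diagonal hU₂u i).ne_zero) key
  refine ⟨rfl, congrArg diagonal (funext fun i => ?_)⟩
  rw [← hdiag i, mul_diagonal, hT₂'l.mul_apply_self hT₁.isLowerTriangular
    OrderDual.toDual.injective, hT₂'d, hT₁.2, one_mul, one_mul]

/-- over any ring `R` with `1` (so `1 ≠ 0`) and `n ≥ 1`, if a matrix
`A` admits two (not necessarily strict) Bruhat decompositions
`A = T₁ * U₁ * P_{π₁} * V₁ = T₂ * U₂ * P_{π₂} * V₂`, then `π₁ = π₂` and `U₁ = U₂`. -/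
theorem bruhat_perm_diag_unique {R : Type*} [Ring R] [Nontrivial R] {n : ℕ} (hn : 1 ≤ n)
    (T₁ T₂ U₁ U₂ V₁ V₂ : Matrix (Fin n) (Fin n) R) (π₁ π₂ : Equiv.Perm (Fin n))
    (hT₁ : UnipotentLower T₁) (hT₂ : UnipotentLower T₂)
    (hU₁ : U₁.IsDiag) (hU₁u : IsUnit U₁) (hU₂ : U₂.IsDiag) (hU₂u : IsUnit U₂)
    (hV₁ : UnipotentUpper V₁) (hV₂ : UnipotentUpper V₂)
    (heq : T₁ * U₁ * π₁.permMatrix R * V₁ = T₂ * U₂ * π₂.permMatrix R * V₂) :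
    π₁ = π₂ ∧ U₁ = U₂ :=
  bruhat_perm_diag_unique_general T₁ T₂ U₁ U₂ V₁ V₂ π₁ π₂ hT₁ hT₂ hU₁ hU₂ hU₂u hV₁ hV₂ heq
end

section
/- Let Γ be an abelian group, E a Γ-graded division ring, and δ₁,…,δₙ ∈ Γ. Let ε₁+Γ_E,…,ε_k+Γ_E be the distinct cosets among δ₁+Γ_E,…,δₙ+Γ_E and let r_ℓ be the number of indices i with δᵢ+Γ_E = ε_ℓ+Γ_E. Then the degree-0 component of Mₙ(E)(δ₁,…,δₙ) is isomorphic as a ring to M_{r₁}(E₀) × … × M_{r_k}(E₀). In particular Mₙ(E)(δ̄)₀ is a semisimple ring when E₀ is a division ring, and it is simple if and only if k = 1. -/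
set_option maxHeartbeats 1000000

/-- The degree-`lam` homogeneous component of the matrix ring `Mₙ(E)(δ̄)` over a
`Γ`-graded ring `E`, with the grading shifted by `δ̄`. -/
def MatrixGrade {Γ E : Type*} [AddCommGroup Γ] [Ring E] (𝒜 : Γ → AddSubgroup E)
    {ι : Type*} (δ : ι → Γ) (lam : Γ) : Set (Matrix ι ι E) :=
  {A | ∀ i j, A i j ∈ 𝒜 (lam + δ j - δ i)}

/-! Pick nonzero, hence invertible, homogeneous `x i ∈ E_{δ i - ε (b i)}`. Conjugating by the
diagonal matrix `diag (x i)` identifies `Mₙ(E)(δ̄)₀` with `Mₙ(E)(ε ∘ b)₀`, whose `(i, j)` entry has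
degree `ε (b j) - ε (b i)`: this lies outside `Γ_E` unless `b i = b j`, so those matrices are
exactly the block-diagonal ones along the fibres of `b` with entries in `E₀`, i.e.
`∏ ℓ M_{r ℓ}(E₀)`. Since the inverse of a homogeneous unit is homogeneous, `E₀` is a division
ring, so each factor is simple and the product is semisimple; a product of simple rings is simple
exactly when it has one factor. -/

open Matrix

section Graded

variable {Γ E : Type*} [AddCommGroup Γ] [DecidableEq Γ] [Ring E] (𝒜 : Γ → AddSubgroup E)
  [GradedRing 𝒜]

theorem Units.inv_mem_graded {γ : Γ} {u : Eˣ} (hu : (u : E) ∈ 𝒜 γ) : ↑u⁻¹ ∈ 𝒜 (-γ) := by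
  have hone : (DirectSum.decompose 𝒜 (1 : E) 0 : E) = 1 :=
    DirectSum.decompose_of_mem_same 𝒜 SetLike.GradedOne.one_mem
  set v := (DirectSum.decompose 𝒜 (↑u⁻¹ : E) (-γ) : E)
  -- `u * v` is the degree-`0` component of `u * u⁻¹ = 1`
  have huv : (u : E) * v = 1 := by
    rw [← DirectSum.coe_decompose_mul_add_of_left_mem 𝒜 hu, add_neg_cancel, u.mul_inv, hone]
  have hv : (↑u⁻¹ : E) = v :=
    calc (↑u⁻¹ : E) = ↑u⁻¹ * (u * v) := by rw [huv, mul_one]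
      _ = v := by rw [← mul_assoc, u.inv_mul, one_mul]
  exact hv ▸ SetLike.coe_mem _

theorem Subring.isUnit_of_ne_zero_of_gradeZero (hdiv : ∀ x ∈ 𝒜 0, x ≠ 0 → IsUnit x)
    (E0 : Subring E) (hE0 : ∀ x : E, x ∈ E0 ↔ x ∈ 𝒜 (0 : Γ)) (a : E0) (ha : a ≠ 0) : IsUnit a := by
  obtain ⟨u, hu⟩ := hdiv a ((hE0 a).1 a.2) (by simpa using ha)
  have hinv : (↑u⁻¹ : E) ∈ E0 := by
    have h := Units.inv_mem_graded 𝒜 (hu ▸ (hE0 a).1 a.2)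
    rwa [neg_zero, ← hE0] at h
  exact ⟨⟨a, ⟨_, hinv⟩, Subtype.ext (by simp [← hu]), Subtype.ext (by simp [← hu])⟩, rfl⟩

noncomputable abbrev Subring.divisionRingOfGradeZero [Nontrivial E]
    (hdiv : ∀ x ∈ 𝒜 0, x ≠ 0 → IsUnit x)
    (E0 : Subring E) (hE0 : ∀ x : E, x ∈ E0 ↔ x ∈ 𝒜 (0 : Γ)) : DivisionRing E0 :=
  DivisionRing.ofIsUnitOrEqZero fun a =>
    (eq_or_ne a 0).symm.imp (isUnit_of_ne_zero_of_gradeZero 𝒜 hdiv E0 hE0 a) id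

end Graded

theorem mem_matrixGrade_zero_comp_iff {Γ E ι κ : Type*} [AddCommGroup Γ] [Ring E]
    (𝒜 : Γ → AddSubgroup E) {ε : κ → Γ} (b : ι → κ)
    (hdistinct : ∀ ℓ ℓ' : κ, (∃ x : E, x ≠ 0 ∧ x ∈ 𝒜 (ε ℓ - ε ℓ')) → ℓ = ℓ')
    {A : Matrix ι ι E} :
    A ∈ MatrixGrade 𝒜 (ε ∘ b) 0 ↔ (∀ i j, A i j ∈ 𝒜 0) ∧ ∀ i j, b i ≠ b j → A i j = 0 := by
  have hdeg : ∀ i j, (0 : Γ) + (ε ∘ b) j - (ε ∘ b) i = ε (b j) - ε (b i) := by simp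
  constructor
  · intro hA
    have hzero : ∀ i j, b i ≠ b j → A i j = 0 := fun i j h => by_contra fun h0 =>
      h (hdistinct _ _ ⟨A i j, h0, hdeg i j ▸ hA i j⟩).symm
    refine ⟨fun i j => ?_, hzero⟩
    by_cases h : b i = b j
    · simpa [hdeg, h] using hA i j
    · simp [hzero i j h]
  · rintro ⟨hmem, hzero⟩ i j
    by_cases h : b i = b j
    · simpa [hdeg, h] using hmem i j
    · simp [hzero i j h]

section DiagonalConj

variable {ι E : Type*} [Fintype ι] [DecidableEq ι] [Ring E]

noncomputable def Matrix.diagonalConj (w : ι → Eˣ) : Matrix ι ι E ≃+* Matrix ι ι E :=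
  MulSemiringAction.toRingEquiv (ConjAct (Matrix ι ι E)ˣ) _
    (ConjAct.toConjAct (Units.map (diagonalRingHom ι E).toMonoidHom (MulEquiv.piUnits.symm w)))

theorem Matrix.diagonalConj_apply (w : ι → Eˣ) (A : Matrix ι ι E) (i j : ι) :
    diagonalConj w A i j = w i * A i j * ↑(w j)⁻¹ := by
  simp [diagonalConj, ConjAct.units_smul_def, diagonal_mul, mul_diagonal]

theorem Matrix.diagonalConj_inv_diagonalConj (w : ι → Eˣ) (A : Matrix ι ι E) :
    diagonalConj w⁻¹ (diagonalConj w A) = A := by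
  ext i j
  simp [diagonalConj_apply, mul_assoc]

variable {Γ : Type*} [AddCommGroup Γ] [DecidableEq Γ] (𝒜 : Γ → AddSubgroup E) [GradedRing 𝒜]

theorem Matrix.diagonalConj_mem_matrixGrade {δ δ' : ι → Γ} {w : ι → Eˣ}
    (hw : ∀ i, (w i : E) ∈ 𝒜 (δ i - δ' i)) {lam : Γ} {A : Matrix ι ι E}
    (hA : A ∈ MatrixGrade 𝒜 δ lam) : diagonalConj w A ∈ MatrixGrade 𝒜 δ' lam := by
  intro i j
  have h := SetLike.mul_mem_graded (SetLike.mul_mem_graded (hw i) (hA i j))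
    (Units.inv_mem_graded 𝒜 (hw j))
  rw [diagonalConj_apply]
  convert h using 2
  abel

theorem Matrix.diagonalConj_mem_matrixGrade_iff {δ δ' : ι → Γ} {w : ι → Eˣ}
    (hw : ∀ i, (w i : E) ∈ 𝒜 (δ i - δ' i)) {lam : Γ} {A : Matrix ι ι E} :
    diagonalConj w A ∈ MatrixGrade 𝒜 δ' lam ↔ A ∈ MatrixGrade 𝒜 δ lam := by
  refine ⟨fun h => ?_, diagonalConj_mem_matrixGrade 𝒜 hw⟩
  have hw' : ∀ i, ((w⁻¹) i : E) ∈ 𝒜 (δ' i - δ i) := fun i => by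
    simpa using Units.inv_mem_graded 𝒜 (hw i)
  simpa only [diagonalConj_inv_diagonalConj] using diagonalConj_mem_matrixGrade 𝒜 hw' h

end DiagonalConj

section FiberBlocks

variable {ι κ R : Type*} [Fintype ι] [DecidableEq ι] [Fintype κ] [DecidableEq κ] [Ring R]
  (E0 : Subring R) (b : ι → κ)

noncomputable def Matrix.fiberBlockDiagonal :
    (Π ℓ, Matrix {i // b i = ℓ} {i // b i = ℓ} E0) →+* Matrix ι ι R :=
  ((reindexRingEquiv R (Equiv.sigmaFiberEquiv b)).toRingHom.comp
    E0.subtype.mapMatrix).comp (blockDiagonal'RingHom _ E0)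

variable {E0 b}

theorem Matrix.fiberBlockDiagonal_apply_fiber (M : Π ℓ, Matrix {i // b i = ℓ} {i // b i = ℓ} E0)
    {ℓ : κ} (p q : {i // b i = ℓ}) : fiberBlockDiagonal E0 b M p q = M ℓ p q := by
  have hsigma : ∀ r : {i // b i = ℓ}, (Equiv.sigmaFiberEquiv b).symm r = ⟨ℓ, r⟩ := fun r =>
    (Equiv.sigmaFiberEquiv b).symm_apply_apply ⟨ℓ, r⟩
  simp [fiberBlockDiagonal, hsigma]

theorem Matrix.fiberBlockDiagonal_apply_of_ne (M : Π ℓ, Matrix {i // b i = ℓ} {i // b i = ℓ} E0)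
    {i j : ι} (h : b i ≠ b j) : fiberBlockDiagonal E0 b M i j = 0 := by
  change E0.subtype (blockDiagonal' M ⟨b i, ⟨i, rfl⟩⟩ ⟨b j, ⟨j, rfl⟩⟩) = 0
  rw [blockDiagonal'_apply_ne M _ _ h, map_zero]

theorem Matrix.fiberBlockDiagonal_injective : Function.Injective (fiberBlockDiagonal E0 b) := by
  intro M N h
  funext ℓ p q
  exact Subtype.ext (by simpa [fiberBlockDiagonal_apply_fiber] using congr($h p q))

theorem Matrix.mem_range_fiberBlockDiagonal_iff {A : Matrix ι ι R} :
    A ∈ (fiberBlockDiagonal E0 b).range ↔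
      (∀ i j, A i j ∈ E0) ∧ ∀ i j, b i ≠ b j → A i j = 0 := by
  constructor
  · rintro ⟨M, rfl⟩
    refine ⟨fun i j => ?_, fun i j h => fiberBlockDiagonal_apply_of_ne M h⟩
    by_cases h : b i = b j
    · have hij : fiberBlockDiagonal E0 b M i j = M (b j) ⟨i, h⟩ ⟨j, rfl⟩ :=
        fiberBlockDiagonal_apply_fiber M (ℓ := b j) ⟨i, h⟩ ⟨j, rfl⟩
      exact hij ▸ SetLike.coe_mem _
    · simp [fiberBlockDiagonal_apply_of_ne M h]
  · rintro ⟨hmem, hzero⟩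
    refine ⟨fun ℓ p q => ⟨A p q, hmem p q⟩, ext fun i j => ?_⟩
    by_cases h : b i = b j
    · exact fiberBlockDiagonal_apply_fiber (ℓ := b j) _ ⟨i, h⟩ ⟨j, rfl⟩
    · rw [hzero i j h]
      exact fiberBlockDiagonal_apply_of_ne _ h

variable (E0 b) in
noncomputable def Matrix.fiberBlockDiagonalEquivRange :
    (Π ℓ, Matrix {i // b i = ℓ} {i // b i = ℓ} E0) ≃+* (fiberBlockDiagonal E0 b).range :=
  RingEquiv.ofBijective (fiberBlockDiagonal E0 b).rangeRestrict
    ⟨fun _ _ h => fiberBlockDiagonal_injective congr(Subtype.val $h),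
      (fiberBlockDiagonal E0 b).rangeRestrict_surjective⟩

end FiberBlocks

theorem isSimpleRing_pi_iff {ι : Type*} {R : ι → Type*} [∀ i, Ring (R i)]
    [∀ i, IsSimpleRing (R i)] : IsSimpleRing (Π i, R i) ↔ Nonempty (Unique ι) := by
  classical
  refine ⟨fun h => ?_, fun ⟨_⟩ => .of_ringEquiv (RingEquiv.piUnique R).symm inferInstance⟩
  obtain ⟨i⟩ : Nonempty ι := by
    by_contra hι
    rw [not_nonempty_iff] at hι
    exact not_subsingleton (Π i, R i) inferInstance
  refine ⟨⟨i⟩, fun j => ?_⟩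
  by_contra hji
  -- evaluation at `i` is injective on a simple ring, but kills `Pi.single j 1`
  have h := (Pi.evalRingHom R i).injective (a₁ := Pi.single j 1) (a₂ := 0)
    (Pi.single_eq_of_ne (Ne.symm hji) _)
  simpa using congr_fun h j

/-- let `E` be a `Γ`-graded division ring and `δ₁, …, δₙ ∈ Γ`.  Let
`ε₁ + Γ_E, …, ε_k + Γ_E` be the distinct cosets among the `δᵢ + Γ_E` (the coset of
`δ i` being `ε (b i) + Γ_E`) and `r ℓ` the number of `i` with `δᵢ + Γ_E = ε_ℓ + Γ_E`.
Then `Mₙ(E)(δ̄)₀ ≅ M_{r₁}(E₀) × … × M_{r_k}(E₀)` as rings; in particular it is a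
semisimple ring, and it is simple if and only if `k = 1`. -/
theorem matrix_grade_zero_component {Γ E : Type*} [AddCommGroup Γ] [DecidableEq Γ]
    [Ring E] [Nontrivial E] (𝒜 : Γ → AddSubgroup E) [GradedRing 𝒜]
    (hdiv : ∀ (γ : Γ) (x : E), x ∈ 𝒜 γ → x ≠ 0 → IsUnit x)
    {n k : ℕ} (δ : Fin n → Γ) (ε : Fin k → Γ) (b : Fin n → Fin k)
    -- `δ i + Γ_E = ε (b i) + Γ_E` for each `i`
    (hb : ∀ i, ∃ x : E, x ≠ 0 ∧ x ∈ 𝒜 (δ i - ε (b i)))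
    (hbsurj : Function.Surjective b)
    -- the cosets `ε ℓ + Γ_E` are pairwise distinct
    (hdistinct : ∀ ℓ ℓ' : Fin k, (∃ x : E, x ≠ 0 ∧ x ∈ 𝒜 (ε ℓ - ε ℓ')) → ℓ = ℓ')
    -- `r ℓ` is the number of `i` with `δ i + Γ_E = ε ℓ + Γ_E`
    (r : Fin k → ℕ)
    (hrdef : ∀ ℓ, r ℓ = (Finset.univ.filter fun i => b i = ℓ).card)
    -- `E₀`, the degree-zero component of `E`, as a subring
    (E0 : Subring E) (hE0 : ∀ x : E, x ∈ E0 ↔ x ∈ 𝒜 (0 : Γ))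
    -- `S₀ = Mₙ(E)(δ̄)₀`, the degree-zero component of `S`, as a subring
    (S0 : Subring (Matrix (Fin n) (Fin n) E))
    (hS0 : ∀ A : Matrix (Fin n) (Fin n) E, A ∈ S0 ↔ A ∈ MatrixGrade 𝒜 δ 0) :
    Nonempty (↥S0 ≃+* ((ℓ : Fin k) → Matrix (Fin (r ℓ)) (Fin (r ℓ)) ↥E0)) ∧
    IsSemisimpleRing ↥S0 ∧
    (IsSimpleRing ↥S0 ↔ k = 1) := by
  classical
  choose x hx0 hx using hb
  let w : Fin n → Eˣ := fun i => (hdiv _ _ (hx i) (hx0 i)).unit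
  let _ := E0.divisionRingOfGradeZero 𝒜 (hdiv 0) hE0
  have hmap : S0.map (diagonalConj w : Matrix (Fin n) (Fin n) E →+* _) =
      (fiberBlockDiagonal E0 b).range := by
    ext A
    rw [Subring.mem_map_equiv, hS0,
      ← diagonalConj_mem_matrixGrade_iff 𝒜 (δ' := ε ∘ b) (w := w) hx, RingEquiv.apply_symm_apply,
      mem_matrixGrade_zero_comp_iff 𝒜 b hdistinct, mem_range_fiberBlockDiagonal_iff]
    simp only [hE0]
  have hcard : ∀ ℓ, Fintype.card {i // b i = ℓ} = r ℓ := fun ℓ => by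
    rw [Fintype.card_subtype, hrdef]
  let iso : S0 ≃+* Π ℓ, Matrix (Fin (r ℓ)) (Fin (r ℓ)) E0 :=
    (RingEquiv.subringMap (diagonalConj w)).trans <| (RingEquiv.subringCongr hmap).trans <|
      (fiberBlockDiagonalEquivRange E0 b).symm.trans <|
        RingEquiv.piCongrRight fun ℓ => reindexRingEquiv E0 (Fintype.equivFinOfCardEq (hcard ℓ))
  have : ∀ ℓ, Nonempty (Fin (r ℓ)) := fun ℓ => by
    obtain ⟨i, hi⟩ := hbsurj ℓ
    exact ⟨Fintype.equivFinOfCardEq (hcard ℓ) ⟨i, hi⟩⟩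
  refine ⟨⟨iso⟩, iso.symm.isSemisimpleRing, ?_⟩
  rw [← Fintype.card_fin k, Fintype.card_eq_one_iff_nonempty_unique,
    ← isSimpleRing_pi_iff (R := fun ℓ => Matrix (Fin (r ℓ)) (Fin (r ℓ)) E0)]
  exact ⟨fun h => .of_ringEquiv iso h, fun h => .of_ringEquiv iso.symm h⟩
end

section
/- Let Γ be a torsion-free abelian group, E a Γ-graded division algebra with center T, Λ = (Γ_E/Γ_T) ∧ (Γ_E/Γ_T) the exterior square of the finite abelian group Γ_E/Γ_T, and e the exponent of Λ. If n ≡ n' (mod e) for positive integers n, n', then [E*,E*]ⁿ·[E*,E₀*] = [E*,E*]^{n'}·[E*,E₀*]; in particular the group [E*,E*]/([E*,E*]ⁿ·[E*,E₀*]) depends only on the congruence class of n modulo e. -/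
/-!
Since `Γ` is torsion-free it embeds into a lexicographically ordered `ℚ`-vector space, so it can
be linearly ordered. Comparing the highest and the lowest degrees of a unit `u` and of `u⁻¹`
(top components multiply to a nonzero top component, homogeneous nonzero elements being units)
shows that every unit of `E` is homogeneous, so the degree is a homomorphism `E* → Γ_E` with
kernel `E₀*`.

Put `K = [E*, E₀*]`. Modulo `K` the elements of `E₀*`, hence all commutators, are central, so
`(a, b) ↦ [a, b] K` is biadditive and alternating. It only depends on the degrees of `a, b`
modulo `Γ_T`, because a unit whose degree lies in `Γ_T` is a central unit times a unit of
degree `0`. Being an alternating biadditive map on `Γ_E/Γ_T`, it factors through `Λ`, so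
`[a, b]^e ∈ K`; as the commutators are central modulo `K`, `x^e ∈ K` for all
`x ∈ [E*, E*]`. Hence `x^n ≡ x^(n mod e)` modulo `K` on `[E*, E*]`.
-/

open DirectSum
open scoped commutatorElement

theorem exists_linearOrder_isOrderedCancelAddMonoid (Γ : Type*) [AddCommGroup Γ]
    [IsAddTorsionFree Γ] : ∃ _ : LinearOrder Γ, IsOrderedCancelAddMonoid Γ := by
  let b := Module.Free.chooseBasis ℚ (DivisibleHull Γ)
  let _ : LinearOrder (Module.Free.ChooseBasisIndex ℚ (DivisibleHull Γ)) :=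
    IsWellOrder.linearOrder WellOrderingRel
  let f : Γ →+ Lex (Module.Free.ChooseBasisIndex ℚ (DivisibleHull Γ) →₀ ℚ) :=
    (toLexAddEquiv _).toAddMonoidHom.comp
      (b.repr.toAddMonoidHom.comp (DivisibleHull.coeAddMonoidHom Γ))
  have hf : Function.Injective f :=
    (toLexAddEquiv _).injective.comp (b.repr.injective.comp DivisibleHull.coe_injective)
  let _ : LinearOrder Γ := LinearOrder.lift' f hf
  exact ⟨_, Function.Injective.isOrderedCancelAddMonoid f (map_add f) Iff.rfl⟩

section GradedUnits

variable {ι A σ : Type*} [DecidableEq ι] [AddCommMonoid ι] [LinearOrder ι]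
  [IsOrderedCancelAddMonoid ι] [Semiring A] [SetLike σ A] [AddSubmonoidClass σ A]
  (𝒜 : ι → σ) [GradedRing 𝒜]

theorem decompose_mul_add_ne_zero [Nontrivial A] {x y : A} {i j : ι}
    (hx : ∀ k, i < k → decompose 𝒜 x k = 0) (hy : ∀ k, j < k → decompose 𝒜 y k = 0)
    (hxi : IsUnit (decompose 𝒜 x i : A)) (hyj : decompose 𝒜 y j ≠ 0) :
    decompose 𝒜 (x * y) (i + j) ≠ 0 := by
  classical
  have hi : i ∈ (decompose 𝒜 x).support := DFinsupp.mem_support_iff.mpr fun h => by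
    simp [h] at hxi
  have hj : j ∈ (decompose 𝒜 y).support := DFinsupp.mem_support_iff.mpr hyj
  rw [ne_eq, ← ZeroMemClass.coe_eq_zero, decompose_mul, coe_mul_apply,
    Finset.sum_eq_single (i, j)]
  · rwa [hxi.mul_right_eq_zero, ZeroMemClass.coe_eq_zero]
  · rintro ⟨k, l⟩ hkl hne
    simp only [Finset.mem_filter, Finset.mem_product, DFinsupp.mem_support_iff] at hkl
    obtain ⟨⟨hk, hl⟩, hkl⟩ := hkl
    have hki : k ≤ i := not_lt.mp fun h => hk (hx k h)
    have hlj : l ≤ j := not_lt.mp fun h => hl (hy l h)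
    obtain ⟨rfl, rfl⟩ := (add_eq_add_iff_eq_and_eq hki hlj).mp hkl
    exact absurd rfl hne
  · intro h
    simp [hi, hj] at h

theorem add_eq_zero_of_isGreatest_support [∀ i (x : 𝒜 i), Decidable (x ≠ 0)] [Nontrivial A]
    (hdiv : ∀ i (a : A), a ∈ 𝒜 i → a ≠ 0 → IsUnit a) (u : Aˣ) {i j : ι}
    (hi : IsGreatest (decompose 𝒜 (u : A)).support i)
    (hj : IsGreatest (decompose 𝒜 (↑u⁻¹ : A)).support j) : i + j = 0 := by
  have hvanish : ∀ {x : A} {i : ι}, IsGreatest (decompose 𝒜 x).support i →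
      ∀ k, i < k → decompose 𝒜 x k = 0 := fun hi k hk =>
    DFinsupp.notMem_support_iff.mp fun h => not_lt_of_ge (hi.2 h) hk
  have hne : decompose 𝒜 ((u : A) * ↑u⁻¹) (i + j) ≠ 0 :=
    decompose_mul_add_ne_zero 𝒜 (hvanish hi) (hvanish hj)
      (hdiv i _ (SetLike.coe_mem _) (by simpa using hi.1)) (DFinsupp.mem_support_iff.mp hj.1)
  rw [Units.mul_inv] at hne
  by_contra h
  exact hne (Subtype.ext (decompose_of_mem_ne 𝒜 (SetLike.one_mem_graded 𝒜) (Ne.symm h)))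

theorem isHomogeneousElem_of_isUnit [Nontrivial A]
    (hdiv : ∀ i (a : A), a ∈ 𝒜 i → a ≠ 0 → IsUnit a) {x : A} (hx : IsUnit x) :
    SetLike.IsHomogeneousElem 𝒜 x := by
  classical
  obtain ⟨u, rfl⟩ := hx
  have hne : ∀ v : Aˣ, (decompose 𝒜 (v : A)).support.Nonempty := fun v =>
    Finset.nonempty_iff_ne_empty.mpr fun h => v.ne_zero <| (decompose 𝒜).injective <| by
      rw [DFinsupp.support_eq_empty.mp h, decompose_zero]
  set M := (decompose 𝒜 (u : A)).support.max' (hne u)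
  set m := (decompose 𝒜 (u : A)).support.min' (hne u)
  have hmax : M + _ = 0 := add_eq_zero_of_isGreatest_support 𝒜 hdiv u
    (Finset.isGreatest_max' _ _) (Finset.isGreatest_max' _ (hne u⁻¹))
  -- the same argument for the reversed order on `ι` bounds the lowest degrees
  let _ : GradedRing fun k : ιᵒᵈ => 𝒜 k.ofDual := ‹GradedRing 𝒜›
  have hmin : m + _ = 0 := add_eq_zero_of_isGreatest_support (ι := ιᵒᵈ) (fun k => 𝒜 k.ofDual)
    hdiv u (i := OrderDual.toDual m) (Finset.isLeast_min' (α := ι) _ (hne u))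
    (Finset.isLeast_min' (α := ι) _ (hne u⁻¹))
  have hmM : m = M := ((add_eq_add_iff_eq_and_eq (Finset.min'_le _ _ (Finset.max'_mem _ _))
    (Finset.min'_le _ _ (Finset.max'_mem _ _))).mp (hmin.trans hmax.symm)).1
  have hsupp : (decompose 𝒜 (u : A)).support = {M} :=
    Finset.eq_singleton_iff_unique_mem.mpr ⟨Finset.max'_mem _ _, fun k hk =>
      le_antisymm (Finset.le_max' _ _ hk) (hmM ▸ Finset.min'_le _ _ hk)⟩
  refine ⟨M, ?_⟩
  rw [← sum_support_decompose 𝒜 (u : A), hsupp, Finset.sum_singleton]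
  exact SetLike.coe_mem _

end GradedUnits

section UnitsDegree

variable {Γ E σ : Type*} [AddGroup Γ] [DecidableEq Γ] [Semiring E] [Nontrivial E]
  [SetLike σ E] [AddSubmonoidClass σ E] (𝒜 : Γ → σ) [GradedRing 𝒜]
  (hhom : ∀ u : Eˣ, SetLike.IsHomogeneousElem 𝒜 (u : E))

noncomputable def unitsDegree : Eˣ →* Multiplicative Γ :=
  MonoidHom.mk' (fun u => Multiplicative.ofAdd (hhom u).choose) fun u v =>
    congrArg Multiplicative.ofAdd <| degree_eq_of_mem_mem 𝒜 (hhom (u * v)).choose_spec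
      (SetLike.mul_mem_graded (hhom u).choose_spec (hhom v).choose_spec) (u * v).ne_zero

theorem toAdd_unitsDegree_eq_iff (u : Eˣ) (γ : Γ) :
    (unitsDegree 𝒜 hhom u).toAdd = γ ↔ (u : E) ∈ 𝒜 γ :=
  ⟨fun h => h ▸ (hhom u).choose_spec, fun h =>
    degree_eq_of_mem_mem 𝒜 (hhom u).choose_spec h u.ne_zero⟩

theorem exists_mem_center_mul_mem_ker_unitsDegree
    (hdiv : ∀ (γ : Γ) (x : E), x ∈ 𝒜 γ → x ≠ 0 → IsUnit x) {g : Eˣ} {x : E} (hx0 : x ≠ 0)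
    (hxg : x ∈ 𝒜 (unitsDegree 𝒜 hhom g).toAdd) (hxc : x ∈ Set.center E) :
    ∃ z ∈ Subgroup.center Eˣ, ∃ n ∈ (unitsDegree 𝒜 hhom).ker, g = z * n := by
  obtain ⟨z, rfl⟩ := hdiv _ x hxg hx0
  have hz : z ∈ Subgroup.center Eˣ :=
    Subgroup.mem_center_iff.mpr fun w => Units.ext ((Set.mem_center_iff.mp hxc).comm w).symm
  refine ⟨z, hz, z⁻¹ * g, ?_, (mul_inv_cancel_left z g).symm⟩
  rw [MonoidHom.mem_ker, map_mul, map_inv, inv_mul_eq_one]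
  exact congrArg Multiplicative.ofAdd ((toAdd_unitsDegree_eq_iff 𝒜 hhom z _).mpr hxg)

end UnitsDegree

section ExteriorSquare

variable {R M N : Type*} [CommRing R] [AddCommGroup M] [Module R M] [AddCommGroup N] [Module R N]

def LinearMap.IsAlt.alternatingMap {f : M →ₗ[R] M →ₗ[R] N} (hf : f.IsAlt) :
    M [⋀^Fin 2]→ₗ[R] N where
  toFun v := f (v 0) (v 1)
  map_update_add' v i x y := by fin_cases i <;> simp
  map_update_smul' v i c x := by fin_cases i <;> simp
  map_eq_zero_of_eq' v i j hv hij := by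
    have : v 0 = v 1 := by fin_cases i <;> fin_cases j <;> simp_all
    simpa [this] using hf (v 1)

theorem LinearMap.IsAlt.exponent_exteriorPower_two_nsmul {f : M →ₗ[R] M →ₗ[R] N}
    (hf : f.IsAlt) (a b : M) : AddMonoid.exponent (⋀[R]^2 M) • f a b = 0 := by
  have h := congrArg (exteriorPower.alternatingMapLinearEquiv hf.alternatingMap)
    (AddMonoid.exponent_nsmul_eq_zero (exteriorPower.ιMulti R 2 ![a, b]))
  rwa [map_nsmul, exteriorPower.alternatingMapLinearEquiv_apply_ιMulti, map_zero] at h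

end ExteriorSquare

section ClassTwo

open scoped IsMulCommutative

variable {P : Type*} [Group P]

theorem commutatorElement_mul_right_of_mem_center {a c : P} (b : P)
    (h : ⁅a, c⁆ ∈ Subgroup.center P) : ⁅a, b * c⁆ = ⁅a, b⁆ * ⁅a, c⁆ := by
  rw [commutatorElement_mul_right_eq_mul_conj, mul_assoc _ b, Subgroup.mem_center_iff.mp h b,
    ← mul_assoc, mul_inv_cancel_right]

theorem commutatorElement_mul_left_of_mem_center {b c : P} (a : P)
    (h : ⁅b, c⁆ ∈ Subgroup.center P) : ⁅a * b, c⁆ = ⁅a, c⁆ * ⁅b, c⁆ := by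
  rw [commutatorElement_mul_left_eq_conj_mul, Subgroup.mem_center_iff.mp h a,
    mul_inv_cancel_right]
  exact (Subgroup.mem_center_iff.mp h _).symm

theorem pow_eq_one_of_mem_commutator (hP : ∀ a b : P, ⁅a, b⁆ ∈ Subgroup.center P) {n : ℕ}
    (hn : ∀ a b : P, ⁅a, b⁆ ^ n = 1) {x : P} (hx : x ∈ commutator P) : x ^ n = 1 := by
  rw [commutator_eq_closure] at hx
  suffices x ∈ Subgroup.center P ∧ x ^ n = 1 from this.2
  induction hx using Subgroup.closure_induction with
  | mem _ hx =>
    obtain ⟨a, b, rfl⟩ := hx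
    exact ⟨hP a b, hn a b⟩
  | one => exact ⟨Subgroup.one_mem _, one_pow n⟩
  | mul x y _ _ hx hy =>
    refine ⟨Subgroup.mul_mem _ hx.1 hy.1, ?_⟩
    rw [Commute.mul_pow (Subgroup.mem_center_iff.mp hy.1 x), hx.2, hy.2, one_mul]
  | inv x _ hx => exact ⟨Subgroup.inv_mem _ hx.1, by rw [inv_pow, hx.2, inv_one]⟩

theorem commutatorElement_pow_exponent_eq_one {Q : Type*} [AddCommGroup Q]
    (hP : ∀ a b : P, ⁅a, b⁆ ∈ Subgroup.center P) (q : P →* Multiplicative Q)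
    (hq : Function.Surjective q) (hker : ∀ a b : P, q b = 1 → ⁅a, b⁆ = 1) (a b : P) :
    ⁅a, b⁆ ^ AddMonoid.exponent (⋀[ℤ]^2 Q) = 1 := by
  have hdep : ∀ {a a' b b' : P}, q a = q a' → q b = q b' → ⁅a, b⁆ = ⁅a', b'⁆ := by
    intro a a' b b' ha hb
    have hk : q (a⁻¹ * a') = 1 := by rw [map_mul, map_inv, ha, inv_mul_cancel]
    have hl : q (b⁻¹ * b') = 1 := by rw [map_mul, map_inv, hb, inv_mul_cancel]
    calc ⁅a, b⁆ = ⁅a, b⁆ * ⁅a⁻¹ * a', b⁆ := by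
          rw [← commutatorElement_inv b (a⁻¹ * a'), hker _ _ hk, inv_one, mul_one]
      _ = ⁅a', b⁆ := by
          rw [← commutatorElement_mul_left_of_mem_center _ (hP _ _), mul_inv_cancel_left]
      _ = ⁅a', b⁆ * ⁅a', b⁻¹ * b'⁆ := by rw [hker _ _ hl, mul_one]
      _ = ⁅a', b'⁆ := by
          rw [← commutatorElement_mul_right_of_mem_center _ (hP _ _), mul_inv_cancel_left]
  -- read through a section `s` of `q`, the commutator is an alternating biadditive map on `Q`
  set s := Function.surjInv hq
  have hs : ∀ x, q (s x) = x := Function.surjInv_eq hq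
  let B : Q → Q → Additive (Subgroup.center P) := fun x y =>
    Additive.ofMul ⟨⁅s (Multiplicative.ofAdd x), s (Multiplicative.ofAdd y)⁆, hP _ _⟩
  have hBl : ∀ x y z, B (x + y) z = B x z + B y z := fun x y z =>
    congrArg Additive.ofMul <| Subtype.ext <|
      (hdep (by rw [map_mul, hs, hs, hs]; rfl) rfl).trans
        (commutatorElement_mul_left_of_mem_center _ (hP _ _))
  have hBr : ∀ x y z, B x (y + z) = B x y + B x z := fun x y z =>
    congrArg Additive.ofMul <| Subtype.ext <|
      (hdep rfl (by rw [map_mul, hs, hs, hs]; rfl)).trans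
        (commutatorElement_mul_right_of_mem_center _ (hP _ _))
  let f : Q →ₗ[ℤ] Q →ₗ[ℤ] Additive (Subgroup.center P) :=
    (AddMonoidHom.mk' (fun x => (AddMonoidHom.mk' (B x) (hBr x)).toIntLinearMap)
      fun x y => LinearMap.ext (hBl x y)).toIntLinearMap
  have hf : f.IsAlt := fun x =>
    congrArg Additive.ofMul (Subtype.ext (commutatorElement_self _))
  have h := hf.exponent_exteriorPower_two_nsmul (q a).toAdd (q b).toAdd
  rw [hdep (hs (q a)).symm (hs (q b)).symm]
  exact congrArg Subtype.val (congrArg Additive.toMul h)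

end ClassTwo

section CommutatorPowers

variable {G : Type*} [Group G]

theorem mk_mem_center_quotient_commutator {N : Subgroup G} [N.Normal] {n : G} (hn : n ∈ N) :
    QuotientGroup.mk' ⁅(⊤ : Subgroup G), N⁆ n ∈
      Subgroup.center (G ⧸ ⁅(⊤ : Subgroup G), N⁆) := by
  refine Subgroup.mem_center_iff.mpr fun g => ?_
  obtain ⟨g, rfl⟩ := QuotientGroup.mk'_surjective _ g
  rw [← commutatorElement_eq_one_iff_mul_comm, ← map_commutatorElement, QuotientGroup.mk'_apply,
    QuotientGroup.eq_one_iff]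
  exact Subgroup.commutator_mem_commutator (Subgroup.mem_top g) hn

theorem pow_exponent_exteriorSquare_mem_commutator {Q : Type*} [AddCommGroup Q]
    (N : Subgroup G) [N.Normal] (hN : commutator G ≤ N) (q : G →* Multiplicative Q)
    (hq : Function.Surjective q)
    (hker : ∀ g, q g = 1 → ∃ z ∈ Subgroup.center G, ∃ n ∈ N, g = z * n)
    {x : G} (hx : x ∈ commutator G) :
    x ^ AddMonoid.exponent (⋀[ℤ]^2 Q) ∈ ⁅(⊤ : Subgroup G), N⁆ := by
  set K := ⁅(⊤ : Subgroup G), N⁆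
  set π := QuotientGroup.mk' K
  have hP : ∀ a b : G ⧸ K, ⁅a, b⁆ ∈ Subgroup.center (G ⧸ K) := by
    intro a b
    obtain ⟨a, rfl⟩ := QuotientGroup.mk'_surjective K a
    obtain ⟨b, rfl⟩ := QuotientGroup.mk'_surjective K b
    rw [← map_commutatorElement]
    exact mk_mem_center_quotient_commutator (hN (Subgroup.commutator_mem_commutator
      (Subgroup.mem_top a) (Subgroup.mem_top b)))
  have hKq : K ≤ q.ker :=
    (Subgroup.commutator_mono le_top le_top).trans (Abelianization.commutator_subset_ker q)
  let q' := QuotientGroup.lift K q hKq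
  have hq' : Function.Surjective q' := fun y => by
    obtain ⟨g, rfl⟩ := hq y
    exact ⟨π g, rfl⟩
  have hker' : ∀ a b : G ⧸ K, q' b = 1 → ⁅a, b⁆ = 1 := by
    intro a b hb
    obtain ⟨a, rfl⟩ := QuotientGroup.mk'_surjective K a
    obtain ⟨b, rfl⟩ := QuotientGroup.mk'_surjective K b
    obtain ⟨z, hz, n, hn, rfl⟩ := hker b hb
    rw [map_mul, commutatorElement_mul_right_of_mem_center _ (hP _ _), ← map_commutatorElement,
      commutatorElement_eq_one_iff_mul_comm.mpr (Subgroup.mem_center_iff.mp hz a), map_one,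
      one_mul, commutatorElement_eq_one_iff_mul_comm]
    exact (Subgroup.mem_center_iff.mp (mk_mem_center_quotient_commutator hn) _)
  have hπx : π x ∈ commutator (G ⧸ K) := by
    have := Subgroup.mem_map_of_mem π hx
    rw [map_commutator_eq] at this
    exact Subgroup.commutator_mono le_top le_top this
  rw [← QuotientGroup.eq_one_iff, ← QuotientGroup.mk'_apply, map_pow]
  exact pow_eq_one_of_mem_commutator hP (commutatorElement_pow_exponent_eq_one hP q' hq' hker') hπx

end CommutatorPowers

theorem pow_exponent_exteriorSquare_mem_commutator_units {Γ E σ : Type*} [AddCommGroup Γ]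
    [DecidableEq Γ] [Semiring E] [Nontrivial E] [SetLike σ E] [AddSubmonoidClass σ E]
    (𝒜 : Γ → σ) [GradedRing 𝒜] (hdiv : ∀ (γ : Γ) (x : E), x ∈ 𝒜 γ → x ≠ 0 → IsUnit x)
    (hhom : ∀ u : Eˣ, SetLike.IsHomogeneousElem 𝒜 (u : E)) (GammaE GammaT : AddSubgroup Γ)
    (hGE : ∀ γ : Γ, γ ∈ GammaE ↔ ∃ x : E, x ≠ 0 ∧ x ∈ 𝒜 γ)
    (hGT : ∀ γ ∈ GammaT, ∃ x : E, x ≠ 0 ∧ x ∈ 𝒜 γ ∧ x ∈ Set.center E)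
    (E0u : Subgroup Eˣ) (hE0u : ∀ u : Eˣ, u ∈ E0u ↔ (u : E) ∈ 𝒜 0)
    {x : Eˣ} (hx : x ∈ commutator Eˣ) :
    x ^ AddMonoid.exponent (⋀[ℤ]^2 (GammaE ⧸ GammaT.addSubgroupOf GammaE)) ∈
      ⁅(⊤ : Subgroup Eˣ), E0u⁆ := by
  set d := unitsDegree 𝒜 hhom
  have hdeg := toAdd_unitsDegree_eq_iff 𝒜 hhom
  obtain rfl : E0u = d.ker := by
    ext u
    rw [hE0u, MonoidHom.mem_ker, ← hdeg]
    rfl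
  have hdE : ∀ u, (d u).toAdd ∈ GammaE := fun u => (hGE _).mpr ⟨u, u.ne_zero, (hdeg u _).mp rfl⟩
  let q : Eˣ →* Multiplicative (GammaE ⧸ GammaT.addSubgroupOf GammaE) :=
    MonoidHom.mk' (fun u => .ofAdd (QuotientAddGroup.mk ⟨(d u).toAdd, hdE u⟩)) fun u v => by
      simp only [map_mul, toAdd_mul]
      rfl
  have hq : Function.Surjective q := by
    intro y
    obtain ⟨⟨γ, hγ⟩, hy⟩ := QuotientAddGroup.mk_surjective y.toAdd
    obtain ⟨a, ha0, haγ⟩ := (hGE γ).mp hγ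
    obtain ⟨u, rfl⟩ := hdiv γ a haγ ha0
    refine ⟨u, ?_⟩
    rw [← ofAdd_toAdd y, ← hy]
    exact congrArg (fun γ' => Multiplicative.ofAdd (QuotientAddGroup.mk γ'))
      (Subtype.ext ((hdeg u γ).mpr haγ))
  have hker : ∀ g, q g = 1 → ∃ z ∈ Subgroup.center Eˣ, ∃ n ∈ d.ker, g = z * n := by
    intro g hg
    have hT : (QuotientAddGroup.mk ⟨(d g).toAdd, hdE g⟩ :
        GammaE ⧸ GammaT.addSubgroupOf GammaE) = 0 := congrArg Multiplicative.toAdd hg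
    rw [QuotientAddGroup.eq_zero_iff, AddSubgroup.mem_addSubgroupOf] at hT
    obtain ⟨a, ha0, hag, hac⟩ := hGT _ hT
    exact exists_mem_center_mul_mem_ker_unitsDegree 𝒜 hhom hdiv ha0 hag hac
  exact pow_exponent_exteriorSquare_mem_commutator d.ker
    (Abelianization.commutator_subset_ker d) q hq hker hx

section PowerClosure

variable {G : Type*} [Group G]

theorem closure_pow_image_sup_eq_mod {S : Set G} {K : Subgroup G} {e : ℕ}
    (hS : ∀ x ∈ S, x ^ e ∈ K) (n : ℕ) :
    Subgroup.closure ((fun y => y ^ n) '' S) ⊔ K =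
      Subgroup.closure ((fun y => y ^ (n % e)) '' S) ⊔ K := by
  have hpow : ∀ x : G, x ^ n = x ^ (n % e) * (x ^ e) ^ (n / e) := fun x => by
    rw [← pow_mul, ← pow_add, Nat.mod_add_div]
  apply le_antisymm <;> refine sup_le ?_ le_sup_right <;> rw [Subgroup.closure_le] <;>
    rintro _ ⟨x, hx, rfl⟩
  · change x ^ n ∈ _
    rw [hpow]
    exact mul_mem (Subgroup.mem_sup_left (Subgroup.subset_closure ⟨x, hx, rfl⟩))
      (Subgroup.mem_sup_right (pow_mem (hS x hx) _))
  · change x ^ (n % e) ∈ _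
    rw [eq_mul_inv_of_mul_eq (hpow x).symm]
    exact mul_mem (Subgroup.mem_sup_left (Subgroup.subset_closure ⟨x, hx, rfl⟩))
      (Subgroup.mem_sup_right (inv_mem (pow_mem (hS x hx) _)))

end PowerClosure

theorem commutator_power_subgroup_depends_only_on_n_mod_e_general {Γ E : Type*}
    [AddCommGroup Γ] [DecidableEq Γ] [Ring E] [Nontrivial E]
    (𝒜 : Γ → AddSubgroup E) [GradedRing 𝒜]
    (hdiv : ∀ (γ : Γ) (x : E), x ∈ 𝒜 γ → x ≠ 0 → IsUnit x)
    -- `Γ` is torsion-free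
    (htf : ∀ (γ : Γ) (m : ℕ), m ≠ 0 → m • γ = 0 → γ = 0)
    -- the grade groups `Γ_E` and `Γ_T` (`T = Z(E)`)
    (GammaE GammaT : AddSubgroup Γ)
    (hGE : ∀ γ : Γ, γ ∈ GammaE ↔ ∃ x : E, x ≠ 0 ∧ x ∈ 𝒜 γ)
    (hGT : ∀ γ : Γ, γ ∈ GammaT ↔ ∃ x : E, x ≠ 0 ∧ x ∈ 𝒜 γ ∧ x ∈ Set.center E)
    -- `E₀*`, the group of units of the degree-zero component
    (E0u : Subgroup Eˣ) (hE0u : ∀ u : Eˣ, u ∈ E0u ↔ u.val ∈ 𝒜 (0 : Γ))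
    -- `n ≡ n' (mod e)`, where `e` is the exponent of `Λ`
    (nn nn' : ℕ)
    (hcong :
      nn % AddMonoid.exponent ↥(⋀[ℤ]^2 (↥GammaE ⧸ GammaT.addSubgroupOf GammaE)) =
      nn' % AddMonoid.exponent ↥(⋀[ℤ]^2 (↥GammaE ⧸ GammaT.addSubgroupOf GammaE))) :
    Subgroup.closure ((fun y : Eˣ => y ^ nn) '' (commutator Eˣ : Set Eˣ)) ⊔
        ⁅(⊤ : Subgroup Eˣ), E0u⁆ =
      Subgroup.closure ((fun y : Eˣ => y ^ nn') '' (commutator Eˣ : Set Eˣ)) ⊔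
        ⁅(⊤ : Subgroup Eˣ), E0u⁆ := by
  have : IsAddTorsionFree Γ := ⟨fun n hn a b h =>
    sub_eq_zero.mp (htf _ n hn (by rw [nsmul_sub]; exact sub_eq_zero.mpr h))⟩
  obtain ⟨_, _⟩ := exists_linearOrder_isOrderedCancelAddMonoid Γ
  have hpow := fun x (hx : x ∈ commutator Eˣ) =>
    pow_exponent_exteriorSquare_mem_commutator_units 𝒜 hdiv
      (fun u => isHomogeneousElem_of_isUnit 𝒜 hdiv u.isUnit) GammaE GammaT hGE
      (fun γ => (hGT γ).mp) E0u hE0u hx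
  rw [closure_pow_image_sup_eq_mod hpow nn, closure_pow_image_sup_eq_mod hpow nn', hcong]

/-- let `Γ` be a torsion-free abelian group, `E` a `Γ`-graded
division algebra with center `T`, `Λ = (Γ_E/Γ_T) ∧ (Γ_E/Γ_T)` the exterior square of
`Γ_E/Γ_T`, and `e` the exponent of `Λ`.  If `n ≡ n' (mod e)` for positive integers
`n, n'`, then `[E*, E*]ⁿ · [E*, E₀*] = [E*, E*]^{n'} · [E*, E₀*]`; in particular
`[E*, E*]/([E*, E*]ⁿ · [E*, E₀*])` depends only on `n mod e`. -/
theorem commutator_power_subgroup_depends_only_on_n_mod_e {Γ E : Type*}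
    [AddCommGroup Γ] [DecidableEq Γ] [Ring E] [Nontrivial E]
    (𝒜 : Γ → AddSubgroup E) [GradedRing 𝒜]
    (hdiv : ∀ (γ : Γ) (x : E), x ∈ 𝒜 γ → x ≠ 0 → IsUnit x)
    -- `Γ` is torsion-free
    (htf : ∀ (γ : Γ) (m : ℕ), m ≠ 0 → m • γ = 0 → γ = 0)
    -- `E` is a graded division *algebra*: finite-dimensional over its center
    (hfin : Module.Finite (Subring.center E) E)
    -- the grade groups `Γ_E` and `Γ_T` (`T = Z(E)`)
    (GammaE GammaT : AddSubgroup Γ)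
    (hGE : ∀ γ : Γ, γ ∈ GammaE ↔ ∃ x : E, x ≠ 0 ∧ x ∈ 𝒜 γ)
    (hGT : ∀ γ : Γ, γ ∈ GammaT ↔ ∃ x : E, x ≠ 0 ∧ x ∈ 𝒜 γ ∧ x ∈ Set.center E)
    (hTE : GammaT ≤ GammaE)
    -- `E₀*`, the group of units of the degree-zero component
    (E0u : Subgroup Eˣ) (hE0u : ∀ u : Eˣ, u ∈ E0u ↔ u.val ∈ 𝒜 (0 : Γ))
    -- `n ≡ n' (mod e)`, where `e` is the exponent of `Λ`
    (nn nn' : ℕ) (hn : 0 < nn) (hn' : 0 < nn')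
    (hcong :
      nn % AddMonoid.exponent ↥(⋀[ℤ]^2 (↥GammaE ⧸ GammaT.addSubgroupOf GammaE)) =
      nn' % AddMonoid.exponent ↥(⋀[ℤ]^2 (↥GammaE ⧸ GammaT.addSubgroupOf GammaE))) :
    Subgroup.closure ((fun y : Eˣ => y ^ nn) '' (commutator Eˣ : Set Eˣ)) ⊔
        ⁅(⊤ : Subgroup Eˣ), E0u⁆ =
      Subgroup.closure ((fun y : Eˣ => y ^ nn') '' (commutator Eˣ : Set Eˣ)) ⊔
        ⁅(⊤ : Subgroup Eˣ), E0u⁆ :=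
  commutator_power_subgroup_depends_only_on_n_mod_e_general 𝒜 hdiv htf GammaE GammaT hGE hGT E0u
    hE0u nn nn' hcong
end
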